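/- arXiv:1301.2157 — 2 statements merged into one kernel-verified Lean document; each statement's English description precedes it below -/
import Mathlib

section
/- Let n, k be natural numbers with 2k ≤ n + 1. Let ℓ₁, …, ℓ_k and ℓ'₁, …, ℓ'_k be nonzero linear forms in ℂ[X,Y] such that all 2k of them are pairwise non-proportional. Then the intersection of the ℂ-span of {ℓ₁ⁿ, …, ℓ_kⁿ} with the ℂ-span of {ℓ'₁ⁿ, …, ℓ'_kⁿ} inside the space of binary forms of degree n is the zero subspace. -/
/-!
Powers `ℓ_s ^ n` of at most `n + 1` pairwise non-proportional linear forms `ℓ_s = a_s X + b_s Y`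
are linearly independent. Induct on `n`: the derivation `b_t ∂_X - a_t ∂_Y` kills `ℓ_t ^ (n + 1)`
and sends every other `ℓ_s ^ (n + 1)` to `(n + 1) (a_s b_t - b_s a_t) ℓ_s ^ n`, a nonzero multiple
of a member of an independent family. Since `2k ≤ n + 1`, the `n`-th powers of all `2k` forms are
independent, so the spans of the two halves meet only in `0`.
-/

open MvPolynomial

/-- The linear form `a*X + b*Y` in `ℂ[X,Y]`. -/
noncomputable def lin (a b : ℂ) : MvPolynomial (Fin 2) ℂ :=
  MvPolynomial.C a * MvPolynomial.X 0 + MvPolynomial.C b * MvPolynomial.X 1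

/-- The partial derivative `∂_X` (for `i = 0`) or `∂_Y` (for `i = 1`) as a linear map. -/
noncomputable def pd (i : Fin 2) :
    MvPolynomial (Fin 2) ℂ →ₗ[ℂ] MvPolynomial (Fin 2) ℂ :=
  (MvPolynomial.pderiv i).toLinearMap

/-- The apolarity operator `q(∂) = Σ q_{ij} ∂_X^i ∂_Y^j`, as a linear map on `ℂ[X,Y]`. -/
noncomputable def apolarL (q : MvPolynomial (Fin 2) ℂ) :
    MvPolynomial (Fin 2) ℂ →ₗ[ℂ] MvPolynomial (Fin 2) ℂ :=
  q.support.sum fun m => q.coeff m • (pd 0 ^ m 0 * pd 1 ^ m 1)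

/-- The apolarity pairing `⟨q, p⟩`: the value of the constant polynomial `q(∂)p`. -/
noncomputable def pairing (q p : MvPolynomial (Fin 2) ℂ) : ℂ :=
  MvPolynomial.coeff 0 (apolarL q p)

theorem linearIndependent_of_map_eq_zero_of_linearIndependent_map_ne {K M N ι : Type*}
    [DivisionRing K] [AddCommGroup M] [Module K M] [AddCommGroup N] [Module K N] [Fintype ι]
    (f : ι → M) (D : M →ₗ[K] N) (t : ι) (hDt : D (f t) = 0) (hft : f t ≠ 0)
    (hD : LinearIndependent K fun s : {s // s ≠ t} => D (f s)) : LinearIndependent K f := by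
  classical
  rw [Fintype.linearIndependent_iff] at hD ⊢
  intro g hg
  have hrest : ∀ s : {s // s ≠ t}, g s = 0 := by
    refine hD (fun s => g s) ?_
    simpa [Fintype.sum_eq_add_sum_subtype_ne _ t, hDt] using congrArg D hg
  have ht : g t = 0 := by
    simpa [Fintype.sum_eq_add_sum_subtype_ne _ t, hrest, hft] using hg
  intro s
  by_cases hs : s = t
  · exact hs ▸ ht
  · exact hrest ⟨s, hs⟩

lemma smul_lin (c a b : ℂ) : c • lin a b = lin (c * a) (c * b) := by
  simp only [lin, smul_add, smul_eq_C_mul, C_mul]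
  ring

lemma exists_lin_eq_smul_of_mul_sub_mul_eq_zero {a b a' b' : ℂ} (hne : lin a' b' ≠ 0)
    (hdet : a * b' - a' * b = 0) : ∃ c : ℂ, lin a b = c • lin a' b' := by
  by_cases ha' : a' = 0
  · have hb' : b' ≠ 0 := by rintro rfl; simp [lin, ha'] at hne
    have ha : a = 0 := by simpa [ha', hb'] using hdet
    refine ⟨b / b', ?_⟩
    rw [smul_lin, ha, ha', mul_zero, div_mul_cancel₀ _ hb']
  · refine ⟨a / a', ?_⟩
    rw [smul_lin, div_mul_cancel₀ _ ha']
    congr 1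
    field_simp
    linear_combination -hdet

lemma smul_pd_sub_smul_pd_lin_pow (a b a' b' : ℂ) (m : ℕ) :
    (b • pd 0 - a • pd 1) (lin a' b' ^ (m + 1)) =
      (((m : ℂ) + 1) * (a' * b - b' * a)) • lin a' b' ^ m := by
  have h0 : pderiv 0 (lin a' b') = C a' := by simp [lin]
  have h1 : pderiv 1 (lin a' b') = C b' := by simp [lin]
  simp only [LinearMap.sub_apply, LinearMap.smul_apply, pd, Derivation.coeFn_coe,
    Derivation.leibniz_pow, h0, h1, add_tsub_cancel_right, smul_eq_C_mul, nsmul_eq_mul,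
    map_mul, map_sub, map_natCast, Nat.cast_succ, map_add, map_one]
  ring

theorem linearIndependent_lin_pow (n : ℕ) {ι : Type*} [Fintype ι] (a b : ι → ℂ)
    (hcard : Fintype.card ι ≤ n + 1) (hne : ∀ s, lin (a s) (b s) ≠ 0)
    (hdet : Pairwise fun s t => a s * b t - a t * b s ≠ 0) :
    LinearIndependent ℂ fun s => lin (a s) (b s) ^ n := by
  induction n generalizing ι with
  | zero =>
    have : Subsingleton ι := Fintype.card_le_one_iff_subsingleton.mp hcard
    simp
  | succ n ih =>
    obtain _ | ⟨⟨t⟩⟩ := isEmpty_or_nonempty ι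
    · exact linearIndependent_empty_type
    classical
    refine linearIndependent_of_map_eq_zero_of_linearIndependent_map_ne _
      (b t • pd 0 - a t • pd 1) t ?_ (pow_ne_zero _ (hne t)) ?_
    · rw [smul_pd_sub_smul_pd_lin_pow, mul_comm (a t), sub_self, mul_zero, zero_smul]
    · have hcard' : Fintype.card {s // s ≠ t} ≤ n + 1 := by
        have := Fintype.card_subtype_lt (p := fun s => s ≠ t) (x := t) (by simp)
        omega
      have hunit (s : {s // s ≠ t}) : ((n : ℂ) + 1) * (a s * b t - b s * a t) ≠ 0 :=
        mul_ne_zero (Nat.cast_add_one_ne_zero n) (by simpa [mul_comm] using hdet s.2)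
      have hli : LinearIndependent ℂ fun s : {s // s ≠ t} => lin (a s) (b s) ^ n :=
        ih (ι := {s // s ≠ t}) (fun s => a s) (fun s => b s) hcard' (fun s => hne s)
          (hdet.comp_of_injective Subtype.val_injective)
      simp only [smul_pd_sub_smul_pd_lin_pow]
      exact hli.units_smul fun s => Units.mk0 _ (hunit s)

/-- For 2k ≤ n + 1, the spans of the n-th powers of two families of k linear forms,
all 2k of which are nonzero and pairwise non-proportional, intersect only in 0. -/
theorem secant_planes_zero_intersection
    (n k : ℕ) (h : 2 * k ≤ n + 1) (a b a' b' : Fin k → ℂ)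
    (L : Fin k ⊕ Fin k → MvPolynomial (Fin 2) ℂ)
    (hL : L = Sum.elim (fun i => lin (a i) (b i)) (fun i => lin (a' i) (b' i)))
    (hne : ∀ s, L s ≠ 0)
    (hprop : ∀ s t, s ≠ t → ∀ c : ℂ, L s ≠ c • L t) :
    Submodule.span ℂ (Set.range fun i : Fin k => L (Sum.inl i) ^ n) ⊓
      Submodule.span ℂ (Set.range fun i : Fin k => L (Sum.inr i) ^ n) = ⊥ := by
  obtain rfl : L = fun s => lin (Sum.elim a a' s) (Sum.elim b b' s) := by
    rw [hL]; funext s; cases s <;> rfl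
  have hdet : Pairwise fun s t =>
      Sum.elim a a' s * Sum.elim b b' t - Sum.elim a a' t * Sum.elim b b' s ≠ 0 := by
    intro s t hst hzero
    obtain ⟨c, hc⟩ := exists_lin_eq_smul_of_mul_sub_mul_eq_zero (hne t) hzero
    exact hprop s t hst c hc
  have hcard : Fintype.card (Fin k ⊕ Fin k) ≤ n + 1 := by
    rw [Fintype.card_sum, Fintype.card_fin]; omega
  have hli := linearIndependent_lin_pow n _ _ hcard hne hdet
  exact disjoint_iff.mp (linearIndependent_sum.mp hli).2.2
end

section
/- Let n, j, k be natural numbers with j + k ≤ n + 1. Suppose a binary form p of degree n over ℂ admits two representations p = Σ_{i=1}^{j} c_i ℓ_iⁿ = Σ_{i=1}^{k} d_i ℓ'_iⁿ, where all coefficients c_i and d_i are nonzero complex numbers, ℓ₁, …, ℓ_j are nonzero pairwise non-proportional linear forms, and ℓ'₁, …, ℓ'_k are nonzero pairwise non-proportional linear forms. Then j = k, and there is a permutation σ of {1, …, k} such that for each i the linear form ℓ'_{σ(i)} is proportional to ℓ_i. -/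
/-! For `ℓ = aX + bY`, the operator `b ∂_X - a ∂_Y` kills `ℓ^(m+1)` and sends `ℓ'^(m+1)` to
`(m+1)(b a' - a b') ℓ'^m`. Moving both decompositions to one side gives a vanishing combination of
at most `n + 1` powers `ℓᵢⁿ`. If some `ℓᵢ` were proportional to no form of the other decomposition,
applying the operators of all the other forms (at most `n` of them) would leave a nonzero multiple of `cᵢ ℓᵢ^(n-j-k+1)`, forcing `cᵢ = 0`. So each form is
proportional to one on the other side; non-proportionality within each side makes these matchings
injective, hence they are bijections. -/

open MvPolynomial

lemma lin_smul (t a b : ℂ) : t • lin a b = lin (t * a) (t * b) := by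
  simp only [lin, smul_eq_C_mul, C_mul]
  ring

lemma lin_injective {a b a' b' : ℂ} (h : lin a b = lin a' b') : a = a' ∧ b = b' := by
  have coeff_lin (i : Fin 2) (a b : ℂ) :
      coeff (Finsupp.single i 1) (lin a b) = if i = 0 then a else b := by
    fin_cases i <;> simp [lin, coeff_X, Finsupp.single_eq_single_iff]
  exact ⟨by simpa [coeff_lin] using congrArg (coeff (Finsupp.single 0 1)) h,
    by simpa [coeff_lin] using congrArg (coeff (Finsupp.single 1 1)) h⟩

lemma lin_ne_zero {a b : ℂ} (h : (a, b) ≠ (0, 0)) : lin a b ≠ 0 := by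
  intro h0
  obtain ⟨rfl, rfl⟩ := lin_injective (h0.trans (by simp [lin]) : lin a b = lin 0 0)
  exact h rfl

lemma exists_lin_eq_smul_of_det_eq_zero {a b a' b' : ℂ} (h : (a, b) ≠ (0, 0))
    (hdet : b' * a - a' * b = 0) : ∃ t : ℂ, lin a' b' = t • lin a b := by
  by_cases ha : a = 0
  · have hb : b ≠ 0 := fun hb => h (by simp [ha, hb])
    have ha' : a' = 0 := by simpa [ha, hb] using hdet
    exact ⟨b' / b, by rw [lin_smul]; congr 1 <;> field_simp; simp [ha, ha']⟩
  · refine ⟨a' / a, ?_⟩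
    rw [lin_smul]
    congr 1 <;> field_simp
    linear_combination hdet

lemma exists_smul_eq_of_eq_smul_of_eq_smul {K V : Type*} [Field K] [AddCommGroup V] [Module K V]
    {x y z : V} {s t : K} (hz : z ≠ 0) (hx : z = s • x) (hy : z = t • y) :
    ∃ u : K, x = u • y := by
  have hs : s ≠ 0 := by rintro rfl; exact hz (by rw [hx, zero_smul])
  exact ⟨s⁻¹ * t, by rw [mul_smul, ← hy, hx, inv_smul_smul₀ hs]⟩

noncomputable def annihDeriv (a b : ℂ) : Module.End ℂ (MvPolynomial (Fin 2) ℂ) :=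
  b • pd 0 - a • pd 1

lemma annihDeriv_lin_pow_succ (a b a' b' : ℂ) (m : ℕ) :
    annihDeriv a b (lin a' b' ^ (m + 1))
      = (((m : ℂ) + 1) * (b * a' - a * b')) • lin a' b' ^ m := by
  have hpow (i : Fin 2) : pderiv i (lin a' b' ^ (m + 1))
      = C ((m : ℂ) + 1) * lin a' b' ^ m * pderiv i (lin a' b') := by
    rw [pderiv_pow, Nat.add_sub_cancel]
    norm_num [C_eq_coe_nat]
  simp only [annihDeriv, pd, LinearMap.sub_apply, LinearMap.smul_apply,
    Derivation.coeFn_coe, hpow, smul_eq_C_mul]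
  simp [lin]
  ring

lemma coeff_eq_zero_of_add_sum_lin_pow_eq_zero {ι : Type*} [DecidableEq ι] (A B : ι → ℂ)
    {x₀ : ι} (hx₀ : (A x₀, B x₀) ≠ (0, 0)) (t : Finset ι) (hx₀t : x₀ ∉ t)
    (hdet : ∀ x ∈ t, B x * A x₀ - A x * B x₀ ≠ 0) (n : ℕ) (hcard : t.card ≤ n) (e : ι → ℂ)
    (h : e x₀ • lin (A x₀) (B x₀) ^ n + ∑ x ∈ t, e x • lin (A x) (B x) ^ n = 0) :
    e x₀ = 0 := by
  induction t using Finset.induction_on generalizing n e with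
  | empty =>
    simpa [pow_ne_zero _ (lin_ne_zero hx₀)] using h
  | @insert x₁ t hx₁ ih =>
    rw [Finset.card_insert_of_notMem hx₁] at hcard
    obtain ⟨m, rfl⟩ : ∃ m, n = m + 1 := ⟨n - 1, by omega⟩
    set e' : ι → ℂ := fun x => e x * (((m : ℂ) + 1) * (B x₁ * A x - A x₁ * B x))
    have hderiv : e' x₀ • lin (A x₀) (B x₀) ^ m + ∑ x ∈ t, e' x • lin (A x) (B x) ^ m = 0 := by
      have := congrArg (annihDeriv (A x₁) (B x₁)) h
      simpa only [map_add, map_sum, map_smul, annihDeriv_lin_pow_succ, Finset.sum_insert hx₁,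
        sub_self, mul_comm (B x₁) (A x₁), mul_zero, zero_smul, smul_zero, zero_add, map_zero,
        smul_smul, e'] using this
    have he' := ih (Finset.notMem_mono (Finset.subset_insert _ _) hx₀t)
      (fun x hx => hdet x (Finset.mem_insert_of_mem hx)) m (by omega) e' hderiv
    have hm : (m : ℂ) + 1 ≠ 0 := by exact_mod_cast m.succ_ne_zero
    simpa [e', hm, hdet x₁ (Finset.mem_insert_self _ _)] using he'

lemma coeff_eq_zero_of_sum_lin_pow_eq_zero {ι : Type*} [Fintype ι] {n : ℕ}
    (hcard : Fintype.card ι ≤ n + 1) (A B e : ι → ℂ) {x₀ : ι} (hx₀ : (A x₀, B x₀) ≠ (0, 0))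
    (hprop : ∀ x, x ≠ x₀ → ∀ u : ℂ, lin (A x) (B x) ≠ u • lin (A x₀) (B x₀))
    (h : ∑ x, e x • lin (A x) (B x) ^ n = 0) : e x₀ = 0 := by
  classical
  refine coeff_eq_zero_of_add_sum_lin_pow_eq_zero A B hx₀ (Finset.univ.erase x₀)
    (Finset.notMem_erase _ _) (fun x hx => ?_) n ?_ e ?_
  · intro hdet
    obtain ⟨u, hu⟩ := exists_lin_eq_smul_of_det_eq_zero hx₀ hdet
    exact hprop x (Finset.ne_of_mem_erase hx) u hu
  · rw [Finset.card_erase_of_mem (Finset.mem_univ _), Finset.card_univ]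
    omega
  · rwa [Finset.add_sum_erase _ (fun x => e x • lin (A x) (B x) ^ n) (Finset.mem_univ _)]

lemma exists_lin_eq_smul_of_sum_lin_pow_eq {ι κ : Type*} [Fintype ι] [Fintype κ] {n : ℕ}
    (hcard : Fintype.card ι + Fintype.card κ ≤ n + 1)
    (a b c : ι → ℂ) (a' b' d : κ → ℂ) (hc : ∀ i, c i ≠ 0) (hne : ∀ i, (a i, b i) ≠ (0, 0))
    (hprop : ∀ i i', i ≠ i' → ∀ t : ℂ, lin (a i) (b i) ≠ t • lin (a i') (b i'))
    (heq : ∑ i, c i • lin (a i) (b i) ^ n = ∑ i, d i • lin (a' i) (b' i) ^ n) (i : ι) :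
    ∃ (i' : κ) (t : ℂ), lin (a' i') (b' i') = t • lin (a i) (b i) := by
  by_contra! hunmatched
  refine hc i (coeff_eq_zero_of_sum_lin_pow_eq_zero (ι := ι ⊕ κ) (by simpa using hcard)
    (Sum.elim a a') (Sum.elim b b') (Sum.elim c (-d)) (x₀ := .inl i) (hne i) ?_ ?_)
  · rintro (x | x') hx u
    · exact hprop x i (fun hxi => hx (congrArg _ hxi)) u
    · exact hunmatched x' u
  · simp [Fintype.sum_sum_type, heq]

lemma injective_of_lin_eq_smul {ι κ : Type*} (a b : ι → ℂ) (a' b' : κ → ℂ)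
    (hne' : ∀ i, (a' i, b' i) ≠ (0, 0))
    (hprop : ∀ i i', i ≠ i' → ∀ t : ℂ, lin (a i) (b i) ≠ t • lin (a i') (b i'))
    (f : ι → κ) (hf : ∀ i, ∃ t : ℂ, lin (a' (f i)) (b' (f i)) = t • lin (a i) (b i)) :
    Function.Injective f := by
  intro i₁ i₂ hf₁₂
  by_contra hne₁₂
  obtain ⟨t₁, ht₁⟩ := hf i₁
  obtain ⟨t₂, ht₂⟩ := hf i₂
  rw [hf₁₂] at ht₁
  obtain ⟨u, hu⟩ := exists_smul_eq_of_eq_smul_of_eq_smul (lin_ne_zero (hne' (f i₂))) ht₁ ht₂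
  exact hprop i₁ i₂ hne₁₂ u hu

/-- Uniqueness of Waring decompositions with j + k ≤ n + 1 summands in total. -/
theorem waring_decomposition_unique
    (n j k : ℕ) (hjk : j + k ≤ n + 1)
    (a b : Fin j → ℂ) (a' b' : Fin k → ℂ) (c : Fin j → ℂ) (d : Fin k → ℂ)
    (hc : ∀ i, c i ≠ 0) (hd : ∀ i, d i ≠ 0)
    (hne : ∀ i, (a i, b i) ≠ (0, 0)) (hne' : ∀ i, (a' i, b' i) ≠ (0, 0))
    (hprop : ∀ i i', i ≠ i' → ∀ t : ℂ, lin (a i) (b i) ≠ t • lin (a i') (b i'))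
    (hprop' : ∀ i i', i ≠ i' → ∀ t : ℂ, lin (a' i) (b' i) ≠ t • lin (a' i') (b' i'))
    (heq : ∑ i : Fin j, c i • lin (a i) (b i) ^ n
         = ∑ i : Fin k, d i • lin (a' i) (b' i) ^ n) :
    j = k ∧ ∃ σ : Fin j ≃ Fin k, ∀ i : Fin j,
      ∃ t : ℂ, lin (a' (σ i)) (b' (σ i)) = t • lin (a i) (b i) := by
  choose f hf using exists_lin_eq_smul_of_sum_lin_pow_eq (by simpa using hjk)
    a b c a' b' d hc hne hprop heq
  choose g hg using exists_lin_eq_smul_of_sum_lin_pow_eq (by simpa [add_comm] using hjk)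
    a' b' d a b c hd hne' hprop' heq.symm
  have hf_inj := injective_of_lin_eq_smul a b a' b' hne' hprop f hf
  have hg_inj := injective_of_lin_eq_smul a' b' a b hne hprop' g hg
  have hjk_eq : j = k := by
    simpa using le_antisymm (Fintype.card_le_of_injective f hf_inj)
      (Fintype.card_le_of_injective g hg_inj)
  have hf_bij : Function.Bijective f :=
    (Fintype.bijective_iff_injective_and_card f).2 ⟨hf_inj, by simp [hjk_eq]⟩
  exact ⟨hjk_eq, Equiv.ofBijective f hf_bij, hf⟩
end
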